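/- In the active graph Γ(M) of a stable matching M, every connected component contains at most one cycle. -/

import Mathlib

/-- A finite bipartite graph with strict preference orders.
Vertices on one side have type `I` ("men"), on the other side `J` ("women").
Edges are pairs `(m, w) : I × J`; the edge set is `E`.
`pI m e f` means vertex `m ∈ I` strictly prefers edge `e` to edge `f`
(both incident to `m`); similarly `pJ` for the `J` side.
The axioms say that each `pI m` (resp. `pJ w`) is a strict linear order
on the set `δ(m)` (resp. `δ(w)`) of edges of `E` incident to the vertex. -/
structure PrefSystem (I J : Type) where
  E : Finset (I × J)
  pI : I → (I × J) → (I × J) → Prop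
  pJ : J → (I × J) → (I × J) → Prop
  pI_irrefl : ∀ m e, ¬ pI m e e
  pI_trans : ∀ m e f g, pI m e f → pI m f g → pI m e g
  pI_total : ∀ m e f, e ∈ E → f ∈ E → e.1 = m → f.1 = m → e ≠ f → pI m e f ∨ pI m f e
  pJ_irrefl : ∀ w e, ¬ pJ w e e
  pJ_trans : ∀ w e f g, pJ w e f → pJ w f g → pJ w e g
  pJ_total : ∀ w e f, e ∈ E → f ∈ E → e.2 = w → f.2 = w → e ≠ f → pJ w e f ∨ pJ w f e

variable {I J : Type}

/-- `M` is a matching: a set of edges of `G`, no two of which share a vertex. -/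
def IsMatching (G : PrefSystem I J) (M : Finset (I × J)) : Prop :=
  M ⊆ G.E ∧ ∀ e ∈ M, ∀ f ∈ M, e ≠ f → e.1 ≠ f.1 ∧ e.2 ≠ f.2

/-- The edge `e ∈ E \ M` blocks `M` if, for each endpoint `v` of `e`,
either `v` is uncovered by `M` or `v` strictly prefers `e` to its `M`-edge. -/
def Blocks (G : PrefSystem I J) (M : Finset (I × J)) (e : I × J) : Prop :=
  e ∈ G.E ∧ e ∉ M ∧ (∀ f ∈ M, f.1 = e.1 → G.pI e.1 e f) ∧
    (∀ f ∈ M, f.2 = e.2 → G.pJ e.2 e f)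

/-- A stable matching: a matching with no blocking edge. -/
def IsStable (G : PrefSystem I J) (M : Finset (I × J)) : Prop :=
  IsMatching G M ∧ ∀ e, ¬ Blocks G M e

/-- `a = mw ∉ M` is admissible for `M`: `M` has an edge at `m` preferred to `a`,
and either `w` is uncovered by `M` or `a` is preferred by `w` to its `M`-edge. -/
def Admissible (G : PrefSystem I J) (M : Finset (I × J)) (a : I × J) : Prop :=
  a ∈ G.E ∧ a ∉ M ∧ (∃ e ∈ M, e.1 = a.1 ∧ G.pI a.1 e a) ∧
    (∀ e ∈ M, e.2 = a.2 → G.pJ a.2 a e)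

/-- `a` is the active edge at the vertex `a.1 ∈ I`: the most preferred
admissible edge incident to `a.1`. -/
def ActiveEdge (G : PrefSystem I J) (M : Finset (I × J)) (a : I × J) : Prop :=
  Admissible G M a ∧ ∀ b, Admissible G M b → b.1 = a.1 → b = a ∨ G.pI a.1 a b

/-- `e` is an edge of the active graph `Γ(M)`: a matching edge or an active edge. -/
def InGamma (G : PrefSystem I J) (M : Finset (I × J)) (e : I × J) : Prop :=
  e ∈ M ∨ ActiveEdge G M e

/-- A rotation for `M`: a (simple, alternating) cycle of the active graph `Γ(M)`,
given as a cyclic sequence `c` of `k ≥ 2` distinct edges of `Γ(M)`, consecutive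
edges sharing a vertex, alternating between `M`-edges and active edges, and such
that non-consecutive edges share no vertex. -/
def IsRotation (G : PrefSystem I J) (M : Finset (I × J))
    (k : ℕ) (c : ZMod k → I × J) : Prop :=
  2 ≤ k ∧ Function.Injective c ∧
  (∀ i, InGamma G M (c i)) ∧
  (∀ i, (c i).1 = (c (i + 1)).1 ∨ (c i).2 = (c (i + 1)).2) ∧
  (∀ i, c i ∈ M ↔ c (i + 1) ∉ M) ∧
  (∀ i j : ZMod k, i ≠ j → ((c i).1 = (c j).1 ∨ (c i).2 = (c j).2) →
    j = i + 1 ∨ i = j + 1)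

/-- The active graph `Γ(M)` as a simple graph on the vertex set `I ⊕ J`. -/
def gammaSG (G : PrefSystem I J) (M : Finset (I × J)) : SimpleGraph (I ⊕ J) where
  Adj u v := match u, v with
    | Sum.inl m, Sum.inr w => InGamma G M (m, w)
    | Sum.inr w, Sum.inl m => InGamma G M (m, w)
    | _, _ => False
  symm := ⟨by rintro (m | w) (m' | w') h <;> simp_all⟩
  loopless := ⟨by rintro (m | w) h <;> simp_all⟩

/-!
Orient each edge of `Γ(M)` away from the vertex that owns it: a man owns his active edge, a woman
her matching edge. A man has at most one active edge and a woman at most one matching edge, so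
every vertex has out-degree at most one and `Γ(M)` is the underlying graph of a partial function.
In such a graph every cycle is directed: a trail that once runs against the orientation can never
turn back, since the vertex it just left is already the successor of the current one. Hence the
vertices of a cycle form the forward orbit of any one of them, and its edges are exactly the
edges leaving that orbit. Following the orientation from any vertex of a component leads into
every cycle of that component, so two cycles of one component meet, and then they have the
same edges.
-/

namespace SimpleGraph

variable {V : Type*} {G : SimpleGraph V} {S : V → V → Prop} {u v x y : V}

open Relation

lemma Walk.IsTrail.forall_darts_rel_snd_fst_of_rel_snd (hS : Relator.RightUnique S)
    {p : (fromRel S).Walk u v} (hp : p.IsTrail) (hnil : ¬p.Nil) (h : S p.snd u) :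
    ∀ d ∈ p.darts, S d.snd d.fst := by
  induction p with
  | nil => exact absurd Walk.Nil.nil hnil
  | cons _ q ih =>
    rw [Walk.snd_cons] at h
    rw [Walk.isTrail_cons] at hp
    simp only [Walk.darts_cons, List.mem_cons, forall_eq_or_imp]
    refine ⟨h, ?_⟩
    cases q with
    | nil => simp
    | @cons _ d _ hcd q =>
      refine ih hp.1 Walk.not_nil_cons ?_
      rw [Walk.snd_cons]
      refine ((fromRel_adj _ _ _).1 hcd).2.resolve_left fun hcd' => hp.2 ?_
      simp [hS hcd' h, Sym2.eq_swap]

lemma Walk.IsCycle.forall_darts_rel_or (hS : Relator.RightUnique S)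
    {p : (fromRel S).Walk u u} (hp : p.IsCycle) :
    (∀ d ∈ p.darts, S d.fst d.snd) ∨ ∀ d ∈ p.reverse.darts, S d.fst d.snd := by
  have hnil : ¬p.Nil := hp.not_nil
  have hnil' : ¬p.reverse.Nil := by simpa using hnil
  rcases ((fromRel_adj _ _ _).1 (p.adj_snd hnil)).2 with hfirst | hfirst
  · rcases ((fromRel_adj _ _ _).1 (p.reverse.adj_snd hnil')).2 with hlast | hlast
    · exact absurd (hS hfirst (p.snd_reverse ▸ hlast)) hp.snd_ne_penultimate
    · left
      intro d hd
      exact hp.isTrail.reverse.forall_darts_rel_snd_fst_of_rel_snd hS hnil' hlast d.symm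
        (by simpa [Walk.darts_reverse] using hd)
  · right
    intro d hd
    exact hp.isTrail.forall_darts_rel_snd_fst_of_rel_snd hS hnil hfirst d.symm
      (by simpa [Walk.darts_reverse] using hd)

lemma Walk.reflTransGen_of_forall_darts {p : G.Walk u v}
    (hp : ∀ d ∈ p.darts, S d.fst d.snd) (hx : x ∈ p.support) :
    ReflTransGen S u x ∧ ReflTransGen S x v := by
  induction p generalizing x with
  | nil =>
    rw [Walk.support_nil, List.mem_singleton] at hx
    exact hx ▸ ⟨.refl, .refl⟩
  | cons _ q ih =>
    simp only [Walk.darts_cons, List.mem_cons, forall_eq_or_imp] at hp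
    rcases (Walk.mem_support_iff _).1 hx with rfl | hx
    · exact ⟨.refl, .head hp.1 (ih hp.2 q.start_mem_support).2⟩
    · exact ⟨.head hp.1 (ih hp.2 hx).1, (ih hp.2 hx).2⟩

lemma Walk.exists_mem_darts_fst_eq {p : G.Walk u u} (hnil : ¬p.Nil)
    (hx : x ∈ p.support) : ∃ d ∈ p.darts, d.fst = x := by
  cases p with
  | nil => exact absurd Walk.Nil.nil hnil
  | @cons _ c _ huc q =>
    have hfirst : ⟨(u, c), huc⟩ ∈ (Walk.cons huc q).darts := by simp
    rw [Walk.support_cons, List.mem_cons] at hx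
    rcases hx with rfl | hx
    · exact ⟨_, hfirst, rfl⟩
    rw [← q.map_fst_darts_append, List.mem_append, List.mem_map, List.mem_singleton] at hx
    rcases hx with ⟨d, hd, rfl⟩ | rfl
    · exact ⟨d, by simp [hd], rfl⟩
    · exact ⟨_, hfirst, rfl⟩

lemma Walk.mem_edges_iff_of_forall_darts (hS : Relator.RightUnique S)
    {p : G.Walk u u} (hnil : ¬p.Nil) (hp : ∀ d ∈ p.darts, S d.fst d.snd)
    (hx : x ∈ p.support) {e : Sym2 V} :
    e ∈ p.edges ↔ ∃ y z, ReflTransGen S x y ∧ S y z ∧ s(y, z) = e := by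
  have hreach : ∀ {y}, y ∈ p.support → ReflTransGen S x y := fun hy =>
    (p.reflTransGen_of_forall_darts hp hx).2.trans (p.reflTransGen_of_forall_darts hp hy).1
  have hclosed : ∀ {y z}, y ∈ p.support → S y z → s(y, z) ∈ p.edges := by
    intro y z hy hyz
    obtain ⟨d, hd, rfl⟩ := p.exists_mem_darts_fst_eq hnil hy
    rw [hS hyz (hp d hd)]
    exact List.mem_map_of_mem hd
  constructor
  · intro he
    obtain ⟨d, hd, rfl⟩ := List.mem_map.1 (p.edges_eq_map_darts ▸ he)
    exact ⟨d.fst, d.snd, hreach (p.dart_fst_mem_support_of_mem_darts hd), hp d hd, rfl⟩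
  · rintro ⟨y, z, hxy, hyz, rfl⟩
    have hy : y ∈ p.support := by
      clear hyz
      induction hxy with
      | refl => exact hx
      | tail _ hstep ih => exact p.snd_mem_support_of_mem_edges (hclosed ih hstep)
    exact hclosed hy hyz

lemma Walk.IsCycle.mem_edges_iff (hS : Relator.RightUnique S) {p : (fromRel S).Walk u u}
    (hp : p.IsCycle) (hx : x ∈ p.support) {e : Sym2 V} :
    e ∈ p.edges ↔ ∃ y z, ReflTransGen S x y ∧ S y z ∧ s(y, z) = e := by
  rcases hp.forall_darts_rel_or hS with h | h
  · exact p.mem_edges_iff_of_forall_darts hS hp.not_nil h hx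
  · rw [← List.mem_reverse, ← Walk.edges_reverse]
    exact p.reverse.mem_edges_iff_of_forall_darts hS (by simpa using hp.not_nil) h
      (by simpa using hx)

lemma Walk.IsCycle.mem_support_of_reflTransGen (hS : Relator.RightUnique S)
    {p : (fromRel S).Walk u u} (hp : p.IsCycle) (hx : x ∈ p.support)
    (hxy : ReflTransGen S x y) : y ∈ p.support := by
  rcases hxy.cases_tail with rfl | ⟨w, hxw, hwy⟩
  · exact hx
  · exact p.snd_mem_support_of_mem_edges ((hp.mem_edges_iff hS hx).2 ⟨w, y, hxw, hwy, rfl⟩)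

lemma Walk.IsCycle.exists_mem_support_reflTransGen (hS : Relator.RightUnique S)
    {p : (fromRel S).Walk u u} (hp : p.IsCycle) (q : (fromRel S).Walk x u) :
    ∃ z ∈ p.support, ReflTransGen S x z := by
  induction q with
  | nil => exact ⟨_, p.start_mem_support, .refl⟩
  | @cons a b _ hab q ih =>
    obtain ⟨z, hz, hbz⟩ := ih hp
    rcases ((fromRel_adj _ _ _).1 hab).2 with hab' | hba
    · exact ⟨z, hz, .head hab' hbz⟩
    rcases hbz.cases_head with rfl | ⟨w, hbw, hwz⟩
    · exact ⟨a, hp.mem_support_of_reflTransGen hS hz (.single hba), .refl⟩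
    · exact ⟨z, hz, hS hbw hba ▸ hwz⟩

theorem Walk.IsCycle.edges_toFinset_eq_of_reachable [DecidableEq V]
    (hS : Relator.RightUnique S) {p : (fromRel S).Walk u u} {q : (fromRel S).Walk v v}
    (hp : p.IsCycle) (hq : q.IsCycle) (huv : (fromRel S).Reachable u v) :
    p.edges.toFinset = q.edges.toFinset := by
  obtain ⟨z, hzp, hvz⟩ := hp.exists_mem_support_reflTransGen hS huv.some.reverse
  have hzq : z ∈ q.support := hq.mem_support_of_reflTransGen hS q.start_mem_support hvz
  ext e
  rw [List.mem_toFinset, List.mem_toFinset, hp.mem_edges_iff hS hzp, hq.mem_edges_iff hS hzq]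

end SimpleGraph

variable {G : PrefSystem I J} {M : Finset (I × J)}

lemma ActiveEdge.eq_of_fst_eq {a b : I × J} (ha : ActiveEdge G M a) (hb : ActiveEdge G M b)
    (hab : a.1 = b.1) : a = b := by
  rcases ha.2 b hb.1 hab.symm with rfl | hpab
  · rfl
  rcases hb.2 a ha.1 hab with rfl | hpba
  · rfl
  rw [← hab] at hpba
  exact absurd (G.pI_trans _ _ _ _ hpab hpba) (G.pI_irrefl _ _)

lemma IsMatching.eq_of_snd_eq (hM : IsMatching G M) {e f : I × J} (he : e ∈ M) (hf : f ∈ M)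
    (hef : e.2 = f.2) : e = f := by
  by_contra hne
  exact (hM.2 e he f hf hne).2 hef

def gammaSucc (G : PrefSystem I J) (M : Finset (I × J)) : I ⊕ J → I ⊕ J → Prop
  | Sum.inl m, Sum.inr w => ActiveEdge G M (m, w)
  | Sum.inr w, Sum.inl m => (m, w) ∈ M
  | _, _ => False

lemma gammaSucc_rightUnique (hM : IsMatching G M) : Relator.RightUnique (gammaSucc G M) := by
  rintro (m | w) (x | x) (y | y) hx hy <;> simp only [gammaSucc] at hx hy ⊢
  · simpa using hx.eq_of_fst_eq hy rfl
  · simpa using hM.eq_of_snd_eq hx hy rfl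

lemma gammaSG_eq_fromRel : gammaSG G M = SimpleGraph.fromRel (gammaSucc G M) := by
  ext (m | w) (m' | w') <;> simp [gammaSG, gammaSucc, InGamma, or_comm]

theorem gamma_component_at_most_one_cycle_general {I J : Type}
    [DecidableEq I] [DecidableEq J] (G : PrefSystem I J)
    (M : Finset (I × J)) (hM : IsStable G M) {u v : I ⊕ J}
    (p : (gammaSG G M).Walk u u) (q : (gammaSG G M).Walk v v)
    (hp : p.IsCycle) (hq : q.IsCycle)
    (huv : (gammaSG G M).Reachable u v) :
    p.edges.toFinset = q.edges.toFinset := by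
  revert p q huv
  rw [gammaSG_eq_fromRel]
  exact fun p q hp hq huv => hp.edges_toFinset_eq_of_reachable (gammaSucc_rightUnique hM.1) hq huv

/-- every connected component of the active graph `Γ(M)` of a
stable matching contains at most one cycle: any two cycles lying in the same
component have the same edge set. -/
theorem gamma_component_at_most_one_cycle {I J : Type} [Fintype I] [Fintype J]
    [DecidableEq I] [DecidableEq J] (G : PrefSystem I J)
    (M : Finset (I × J)) (hM : IsStable G M) {u v : I ⊕ J}
    (p : (gammaSG G M).Walk u u) (q : (gammaSG G M).Walk v v)
    (hp : p.IsCycle) (hq : q.IsCycle)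
    (huv : (gammaSG G M).Reachable u v) :
    p.edges.toFinset = q.edges.toFinset :=
  gamma_component_at_most_one_cycle_general G M hM p q hp hq huv
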